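/- In the substitution game with pass budget N, under the greedy coach strategy (choosing a non-passing player with maximal remaining passes), every reachable configuration satisfies |M| ≤ N + 1; hence N + 1 reserve players suffice for the coach to win. -/
import Mathlib


/-- One round of the substitution game with pass budget `N`, where the coach plays
greedily: if `P ≠ M` he chooses a non-passing player `p ∈ M \ P` with a largest
number of remaining passes, otherwise a fresh player `p = |M|`.
The new configuration is `M' = M ∪ {p}` with `f' p = N`, `f'` decremented on `P \ {p}`
and unchanged elsewhere. -/
def GreedyStep (N : ℕ) (M : Finset ℕ) (f : ℕ → ℕ) (M' : Finset ℕ) (f' : ℕ → ℕ) : Prop :=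
  ∃ P : Finset ℕ, P ⊆ M ∧ (∀ m ∈ P, 1 ≤ f m) ∧
    ∃ p : ℕ,
      ((P ≠ M ∧ p ∈ M \ P ∧ ∀ m ∈ M \ P, f m ≤ f p) ∨ (P = M ∧ p = M.card)) ∧
      M' = insert p M ∧
      f' p = N ∧
      (∀ m ∈ M, m ≠ p → f' m = if m ∈ P then f m - 1 else f m)

/-- under the greedy coach strategy, every reachable configuration of the
substitution game satisfies `|M| ≤ N + 1`; hence `N + 1` reserve players suffice
for the coach to continue the game forever. -/
theorem greedy_bound (N : ℕ) (M : ℕ → Finset ℕ) (f : ℕ → ℕ → ℕ)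
    (h0 : M 0 = ∅)
    (hstep : ∀ t, GreedyStep N (M t) (f t) (M (t + 1)) (f (t + 1))) :
    ∀ t, (M t).card ≤ N + 1 := by
  have key : ∀ t j, ((M t).filter (fun m => j ≤ f t m)).card ≤ N + 1 - j := by
    intro t
    induction t with
    | zero => intro j; simp [h0]
    | succ t ih =>
      obtain ⟨P, hPM, hP1, p, hcase, hM', hfp, hf'⟩ := hstep t
      have hbd : ∀ m ∈ M t, f t m ≤ N := by
        intro m hm
        by_contra h
        have h1 := ih (N + 1)
        have hmem : m ∈ (M t).filter (fun m => N + 1 ≤ f t m) := by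
          simp only [Finset.mem_filter]; exact ⟨hm, by omega⟩
        have := Finset.card_pos.mpr ⟨m, hmem⟩
        omega
      intro j
      rcases le_or_gt (N + 1) j with hj | hj
      · have hempty : (M (t + 1)).filter (fun m => j ≤ f (t + 1) m) = ∅ := by
          rw [Finset.filter_eq_empty_iff]
          intro m hm
          rcases eq_or_ne m p with rfl | hne
          · rw [hfp]; omega
          · have hmM : m ∈ M t := by
              rw [hM'] at hm; exact (Finset.mem_insert.mp hm).resolve_left hne
            have hfm := hf' m hmM hne
            have hb := hbd m hmM
            split_ifs at hfm <;> omega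
        simp [hempty]
      · rcases hcase with ⟨hne, hp, hmax⟩ | ⟨hPeq, hpcard⟩
        · have hpM : p ∈ M t := (Finset.mem_sdiff.mp hp).1
          have hpP : p ∉ P := (Finset.mem_sdiff.mp hp).2
          rcases le_or_gt j (f t p) with hjp | hjp
          · have hsub : (M (t + 1)).filter (fun m => j ≤ f (t + 1) m) ⊆
                (M t).filter (fun m => j ≤ f t m) := by
              intro m hm
              rw [Finset.mem_filter] at hm ⊢
              obtain ⟨hmM', hmf⟩ := hm
              have hmM : m ∈ M t := by
                rw [hM'] at hmM'
                rcases Finset.mem_insert.mp hmM' with rfl | h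
                · exact hpM
                · exact h
              refine ⟨hmM, ?_⟩
              rcases eq_or_ne m p with rfl | hne'
              · exact hjp
              · have hfm := hf' m hmM hne'
                split_ifs at hfm <;> omega
            calc ((M (t + 1)).filter (fun m => j ≤ f (t + 1) m)).card
                ≤ ((M t).filter (fun m => j ≤ f t m)).card := Finset.card_le_card hsub
              _ ≤ N + 1 - j := ih j
          · have hsub : (M (t + 1)).filter (fun m => j ≤ f (t + 1) m) ⊆
                insert p ((M t).filter (fun m => j + 1 ≤ f t m)) := by
              intro m hm
              rw [Finset.mem_filter] at hm
              obtain ⟨hmM', hmf⟩ := hm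
              rcases eq_or_ne m p with rfl | hne'
              · exact Finset.mem_insert_self _ _
              · have hmM : m ∈ M t := by
                  rw [hM'] at hmM'
                  rcases Finset.mem_insert.mp hmM' with rfl | h
                  · exact hpM
                  · exact h
                have hfm := hf' m hmM hne'
                refine Finset.mem_insert_of_mem (Finset.mem_filter.mpr ⟨hmM, ?_⟩)
                by_cases hmP : m ∈ P
                · have h1 := hP1 m hmP
                  rw [if_pos hmP] at hfm; omega
                · have hms : m ∈ M t \ P := Finset.mem_sdiff.mpr ⟨hmM, hmP⟩
                  have hle := hmax m hms
                  rw [if_neg hmP] at hfm; omega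
            have h1 := ih (j + 1)
            calc ((M (t + 1)).filter (fun m => j ≤ f (t + 1) m)).card
                ≤ (insert p ((M t).filter (fun m => j + 1 ≤ f t m))).card :=
                  Finset.card_le_card hsub
              _ ≤ ((M t).filter (fun m => j + 1 ≤ f t m)).card + 1 :=
                  Finset.card_insert_le _ _
              _ ≤ N + 1 - j := by omega
        · have hsub : (M (t + 1)).filter (fun m => j ≤ f (t + 1) m) ⊆
              insert p ((M t).filter (fun m => j + 1 ≤ f t m)) := by
            intro m hm
            rw [Finset.mem_filter] at hm
            obtain ⟨hmM', hmf⟩ := hm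
            rcases eq_or_ne m p with rfl | hne'
            · exact Finset.mem_insert_self _ _
            · have hmM : m ∈ M t := by
                rw [hM'] at hmM'
                exact (Finset.mem_insert.mp hmM').resolve_left hne'
              have hfm := hf' m hmM hne'
              have hmP : m ∈ P := hPeq ▸ hmM
              have h1 := hP1 m hmP
              rw [if_pos hmP] at hfm
              exact Finset.mem_insert_of_mem (Finset.mem_filter.mpr ⟨hmM, by omega⟩)
          have h1 := ih (j + 1)
          calc ((M (t + 1)).filter (fun m => j ≤ f (t + 1) m)).card
              ≤ (insert p ((M t).filter (fun m => j + 1 ≤ f t m))).card :=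
                Finset.card_le_card hsub
            _ ≤ ((M t).filter (fun m => j + 1 ≤ f t m)).card + 1 :=
                Finset.card_insert_le _ _
            _ ≤ N + 1 - j := by omega
  intro t
  have h := key t 0
  simpa using h
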